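/- With notation as in the context, the elements c₂, n₁², n₁·m₁ and m₁² of ℚ[n₁, m₁, c₂] all belong to the ideal I; equivalently, the degree-2 graded piece of the quotient ring ℚ[n₁, m₁, c₂]/I is zero. (This is the algebraic content of the Lemma asserting that κ₁² = 0 holds in H⁴(N_n;ℚ), since A*(N_n) ≅ ℚ[n₁,m₁,c₂]/I and κ₁ is a class of degree 1.) -/
import Mathlib


open MvPolynomial

noncomputable section

/-- In `ℚ[n₁, m₁, c₂]` (with `n₁ = X 0`, `m₁ = X 1`, `c₂ = X 2`), the ideal `I` of
Canning–Larson relations for the Chow ring of the Maroni stratum `Nₙ`, where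
`b = (g + n + 2)/2` is the larger part of the splitting type. -/
def CLIdeal (g b : ℤ) : Ideal (MvPolynomial (Fin 3) ℚ) :=
  Ideal.span
    { C (((-9) * b + 8 * g + 12 : ℤ) : ℚ) * X 0 + C ((9 * b - g - 6 : ℤ) : ℚ) * X 1,
      4 * X 0 ^ 2 - X 0 * X 1 + 4 * X 1 ^ 2 +
        C (((-9) * b ^ 2 + 9 * b * g - 4 * g ^ 2 + 18 * b - 12 * g - 8 : ℤ) : ℚ) * X 2,
      C (((-12) * b + 12 * g + 20 : ℤ) : ℚ) * X 0 ^ 2 - 2 * (X 0 * X 1) +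
        C ((12 * b - 4 : ℤ) : ℚ) * X 1 ^ 2 +
        C (((-12) * b ^ 2 * g + 12 * b * g ^ 2 - 4 * g ^ 3 - 18 * b ^ 2 + 42 * b * g
            - 20 * g ^ 2 + 36 * b - 32 * g - 16 : ℤ) : ℚ) * X 2,
      4 * X 0 ^ 3 + 4 * X 1 ^ 3 +
        C (((-12) * b ^ 2 + 24 * b * g - 12 * g ^ 2 + 42 * b - 40 * g - 32 : ℤ) : ℚ) *
          (X 0 * X 2) +
        C (((-12) * b ^ 2 + 6 * b + 2 * g + 4 : ℤ) : ℚ) * (X 1 * X 2) }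

/-- Cancel a nonzero constant from an ideal membership. -/
lemma cancelC {I : Ideal (MvPolynomial (Fin 3) ℚ)} {c : ℚ} {p : MvPolynomial (Fin 3) ℚ}
    (hc : c ≠ 0) (h : C c * p ∈ I) : p ∈ I := by
  have h2 := I.mul_mem_left (C c⁻¹) h
  rwa [← mul_assoc, ← map_mul, inv_mul_cancel₀ hc, map_one, one_mul] at h2

/-- Abstract elimination: if an ideal of `ℚ[x,y,z]` contains a linear form `Ax + By`
with `B ≠ 0` and two quadratic relations whose degree-2 "determinant" `Δ` is nonzero,
then the whole degree-2 piece lies in the ideal. -/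
lemma aux_elim (A B c2 d e f : ℚ) (hB : B ≠ 0)
    (hD : (4 * B ^ 2 + A * B + 4 * A ^ 2) * f - (d * B ^ 2 + 2 * A * B + e * A ^ 2) * c2 ≠ 0)
    (I : Ideal (MvPolynomial (Fin 3) ℚ))
    (h1 : C A * X 0 + C B * X 1 ∈ I)
    (h2 : 4 * X 0 ^ 2 - X 0 * X 1 + 4 * X 1 ^ 2 + C c2 * X 2 ∈ I)
    (h3 : C d * X 0 ^ 2 - 2 * (X 0 * X 1) + C e * X 1 ^ 2 + C f * X 2 ∈ I) :
    X 2 ∈ I ∧ X 0 ^ 2 ∈ I ∧ X 0 * X 1 ∈ I ∧ X 1 ^ 2 ∈ I := by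
  have hx2 : (X 0 ^ 2 : MvPolynomial (Fin 3) ℚ) ∈ I := by
    apply cancelC hD
    have hid : (C ((4 * B ^ 2 + A * B + 4 * A ^ 2) * f
          - (d * B ^ 2 + 2 * A * B + e * A ^ 2) * c2) * X 0 ^ 2 : MvPolynomial (Fin 3) ℚ) =
        (C c2 * (C (e * B) * X 1 - C (2 * B + e * A) * X 0)
            - C f * (C (4 * B) * X 1 - C (4 * A + B) * X 0))
            * (C A * X 0 + C B * X 1)
          + C (f * B ^ 2) * (4 * X 0 ^ 2 - X 0 * X 1 + 4 * X 1 ^ 2 + C c2 * X 2)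
          - C (c2 * B ^ 2) * (C d * X 0 ^ 2 - 2 * (X 0 * X 1) + C e * X 1 ^ 2 + C f * X 2) := by
      simp only [map_mul, map_add, map_sub, map_pow, map_ofNat]
      ring
    rw [hid]
    exact sub_mem (add_mem (I.mul_mem_left _ h1) (I.mul_mem_left _ h2)) (I.mul_mem_left _ h3)
  have hz : (X 2 : MvPolynomial (Fin 3) ℚ) ∈ I := by
    apply cancelC (mul_ne_zero hD (pow_ne_zero 2 hB))
    have hid : (C (((4 * B ^ 2 + A * B + 4 * A ^ 2) * f
          - (d * B ^ 2 + 2 * A * B + e * A ^ 2) * c2) * B ^ 2) * X 2 : MvPolynomial (Fin 3) ℚ) =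
        (C (d * B ^ 2 + 2 * A * B + e * A ^ 2)
              * (C (4 * B) * X 1 - C (4 * A + B) * X 0)
            - C (4 * B ^ 2 + A * B + 4 * A ^ 2)
              * (C (e * B) * X 1 - C (2 * B + e * A) * X 0))
            * (C A * X 0 + C B * X 1)
          + C ((4 * B ^ 2 + A * B + 4 * A ^ 2) * B ^ 2)
            * (C d * X 0 ^ 2 - 2 * (X 0 * X 1) + C e * X 1 ^ 2 + C f * X 2)
          - C ((d * B ^ 2 + 2 * A * B + e * A ^ 2) * B ^ 2)
            * (4 * X 0 ^ 2 - X 0 * X 1 + 4 * X 1 ^ 2 + C c2 * X 2) := by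
      simp only [map_mul, map_add, map_sub, map_pow, map_ofNat]
      ring
    rw [hid]
    exact sub_mem (add_mem (I.mul_mem_left _ h1) (I.mul_mem_left _ h3)) (I.mul_mem_left _ h2)
  have hxy : (X 0 * X 1 : MvPolynomial (Fin 3) ℚ) ∈ I := by
    apply cancelC hB
    have hid : (C B * (X 0 * X 1) : MvPolynomial (Fin 3) ℚ) = X 0 * (C A * X 0 + C B * X 1) - C A * X 0 ^ 2 := by ring
    rw [hid]
    exact sub_mem (I.mul_mem_left _ h1) (I.mul_mem_left _ hx2)
  have hy2 : (X 1 ^ 2 : MvPolynomial (Fin 3) ℚ) ∈ I := by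
    apply cancelC hB
    have hid : (C B * X 1 ^ 2 : MvPolynomial (Fin 3) ℚ) = X 1 * (C A * X 0 + C B * X 1) - C A * (X 0 * X 1) := by ring
    rw [hid]
    exact sub_mem (I.mul_mem_left _ h1) (I.mul_mem_left _ hxy)
  exact ⟨hz, hx2, hxy, hy2⟩

/-- Positivity of the degree-2 determinant on the admissible Maroni region. -/
lemma deltaZ_pos (g n b : ℤ) (hn : 1 ≤ n) (hmar : 3 * n ≤ g + 2) (hb : 2 * b = g + n + 2) :
    0 < (4 * (9 * b - g - 6) ^ 2 + ((-9) * b + 8 * g + 12) * (9 * b - g - 6)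
            + 4 * ((-9) * b + 8 * g + 12) ^ 2)
          * ((-12) * b ^ 2 * g + 12 * b * g ^ 2 - 4 * g ^ 3 - 18 * b ^ 2 + 42 * b * g
            - 20 * g ^ 2 + 36 * b - 32 * g - 16)
        - (((-12) * b + 12 * g + 20) * (9 * b - g - 6) ^ 2
            + 2 * ((-9) * b + 8 * g + 12) * (9 * b - g - 6)
            + (12 * b - 4) * ((-9) * b + 8 * g + 12) ^ 2)
          * ((-9) * b ^ 2 + 9 * b * g - 4 * g ^ 2 + 18 * b - 12 * g - 8) := by
  obtain ⟨m, rfl⟩ : ∃ m, n = m + 1 := ⟨n - 1, by omega⟩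
  obtain ⟨t, rfl⟩ : ∃ t, b = t + 2 * (m + 1) := ⟨b - 2 * (m + 1), by omega⟩
  have hg : g = 2 * t + 3 * m + 1 := by omega
  subst hg
  have ht : (0 : ℤ) ≤ t := by omega
  have hm : (0 : ℤ) ≤ m := by omega
  have key : (4 * (9 * (t + 2 * (m + 1)) - (2 * t + 3 * m + 1) - 6) ^ 2
          + ((-9) * (t + 2 * (m + 1)) + 8 * (2 * t + 3 * m + 1) + 12)
            * (9 * (t + 2 * (m + 1)) - (2 * t + 3 * m + 1) - 6)
          + 4 * ((-9) * (t + 2 * (m + 1)) + 8 * (2 * t + 3 * m + 1) + 12) ^ 2)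
          * ((-12) * (t + 2 * (m + 1)) ^ 2 * (2 * t + 3 * m + 1)
            + 12 * (t + 2 * (m + 1)) * (2 * t + 3 * m + 1) ^ 2 - 4 * (2 * t + 3 * m + 1) ^ 3
            - 18 * (t + 2 * (m + 1)) ^ 2 + 42 * (t + 2 * (m + 1)) * (2 * t + 3 * m + 1)
            - 20 * (2 * t + 3 * m + 1) ^ 2 + 36 * (t + 2 * (m + 1))
            - 32 * (2 * t + 3 * m + 1) - 16)
        - (((-12) * (t + 2 * (m + 1)) + 12 * (2 * t + 3 * m + 1) + 20)
              * (9 * (t + 2 * (m + 1)) - (2 * t + 3 * m + 1) - 6) ^ 2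
            + 2 * ((-9) * (t + 2 * (m + 1)) + 8 * (2 * t + 3 * m + 1) + 12)
              * (9 * (t + 2 * (m + 1)) - (2 * t + 3 * m + 1) - 6)
            + (12 * (t + 2 * (m + 1)) - 4)
              * ((-9) * (t + 2 * (m + 1)) + 8 * (2 * t + 3 * m + 1) + 12) ^ 2)
          * ((-9) * (t + 2 * (m + 1)) ^ 2 + 9 * (t + 2 * (m + 1)) * (2 * t + 3 * m + 1)
            - 4 * (2 * t + 3 * m + 1) ^ 2 + 18 * (t + 2 * (m + 1))
            - 12 * (2 * t + 3 * m + 1) - 8)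
      = 288 + 5904 * m + 31536 * m ^ 2 + 68688 * m ^ 3 + 66096 * m ^ 4 + 23328 * m ^ 5
        + 9552 * t + 74664 * (t * m) + 205200 * (t * m ^ 2) + 236520 * (t * m ^ 3)
        + 97200 * (t * m ^ 4) + 31296 * t ^ 2 + 163944 * (t ^ 2 * m)
        + 272808 * (t ^ 2 * m ^ 2) + 145152 * (t ^ 2 * m ^ 3) + 40176 * t ^ 3
        + 131040 * (t ^ 3 * m) + 102816 * (t ^ 3 * m ^ 2) + 22848 * t ^ 4
        + 35280 * (t ^ 4 * m) + 4704 * t ^ 5 := by ring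
  rw [key]
  have hmono : ∀ i j : ℕ, (0 : ℤ) ≤ t ^ i * m ^ j := fun i j =>
    mul_nonneg (pow_nonneg ht i) (pow_nonneg hm j)
  nlinarith [hmono 0 1, hmono 0 2, hmono 0 3, hmono 0 4, hmono 0 5,
    hmono 1 0, hmono 1 1, hmono 1 2, hmono 1 3, hmono 1 4,
    hmono 2 0, hmono 2 1, hmono 2 2, hmono 2 3,
    hmono 3 0, hmono 3 1, hmono 3 2,
    hmono 4 0, hmono 4 1, hmono 5 0]

/-- Lemma 4.2 (algebraic content): with `n ≥ 1`, `g ≡ n (mod 2)`, `3n ≤ g + 2` and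
`b = (g + n + 2)/2`, the elements `c₂`, `n₁²`, `n₁·m₁`, `m₁²` of `ℚ[n₁, m₁, c₂]` all lie in
the ideal `I`; i.e. the degree-2 graded piece of `ℚ[n₁, m₁, c₂]/I ≅ A*(Nₙ)` vanishes, so
`κ₁² = 0` in `H⁴(Nₙ; ℚ)`. -/
theorem degree_two_vanishes (g n b : ℤ) (hn : 1 ≤ n) (hpar : g % 2 = n % 2)
    (hmar : 3 * n ≤ g + 2) (hb : 2 * b = g + n + 2) :
    X 2 ∈ CLIdeal g b ∧ X 0 ^ 2 ∈ CLIdeal g b ∧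
      X 0 * X 1 ∈ CLIdeal g b ∧ X 1 ^ 2 ∈ CLIdeal g b := by
  have hBZ : (0 : ℤ) < 9 * b - g - 6 := by omega
  have hB : (((9 * b - g - 6 : ℤ) : ℚ)) ≠ 0 := Int.cast_ne_zero.mpr hBZ.ne'
  have hDZ := deltaZ_pos g n b hn hmar hb
  have hDcast :
      (4 * (((9 * b - g - 6 : ℤ) : ℚ)) ^ 2
          + (((-9) * b + 8 * g + 12 : ℤ) : ℚ) * (((9 * b - g - 6 : ℤ) : ℚ))
          + 4 * (((-9) * b + 8 * g + 12 : ℤ) : ℚ) ^ 2)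
          * (((-12) * b ^ 2 * g + 12 * b * g ^ 2 - 4 * g ^ 3 - 18 * b ^ 2 + 42 * b * g
            - 20 * g ^ 2 + 36 * b - 32 * g - 16 : ℤ) : ℚ)
        - ((((-12) * b + 12 * g + 20 : ℤ) : ℚ) * (((9 * b - g - 6 : ℤ) : ℚ)) ^ 2
            + 2 * (((-9) * b + 8 * g + 12 : ℤ) : ℚ) * (((9 * b - g - 6 : ℤ) : ℚ))
            + ((12 * b - 4 : ℤ) : ℚ) * (((-9) * b + 8 * g + 12 : ℤ) : ℚ) ^ 2)
          * (((-9) * b ^ 2 + 9 * b * g - 4 * g ^ 2 + 18 * b - 12 * g - 8 : ℤ) : ℚ)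
      = (((4 * (9 * b - g - 6) ^ 2 + ((-9) * b + 8 * g + 12) * (9 * b - g - 6)
            + 4 * ((-9) * b + 8 * g + 12) ^ 2)
          * ((-12) * b ^ 2 * g + 12 * b * g ^ 2 - 4 * g ^ 3 - 18 * b ^ 2 + 42 * b * g
            - 20 * g ^ 2 + 36 * b - 32 * g - 16)
        - (((-12) * b + 12 * g + 20) * (9 * b - g - 6) ^ 2
            + 2 * ((-9) * b + 8 * g + 12) * (9 * b - g - 6)
            + (12 * b - 4) * ((-9) * b + 8 * g + 12) ^ 2)
          * ((-9) * b ^ 2 + 9 * b * g - 4 * g ^ 2 + 18 * b - 12 * g - 8) : ℤ) : ℚ) := by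
    push_cast
    ring
  have hD : (4 * (((9 * b - g - 6 : ℤ) : ℚ)) ^ 2
          + (((-9) * b + 8 * g + 12 : ℤ) : ℚ) * (((9 * b - g - 6 : ℤ) : ℚ))
          + 4 * (((-9) * b + 8 * g + 12 : ℤ) : ℚ) ^ 2)
          * (((-12) * b ^ 2 * g + 12 * b * g ^ 2 - 4 * g ^ 3 - 18 * b ^ 2 + 42 * b * g
            - 20 * g ^ 2 + 36 * b - 32 * g - 16 : ℤ) : ℚ)
        - ((((-12) * b + 12 * g + 20 : ℤ) : ℚ) * (((9 * b - g - 6 : ℤ) : ℚ)) ^ 2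
            + 2 * (((-9) * b + 8 * g + 12 : ℤ) : ℚ) * (((9 * b - g - 6 : ℤ) : ℚ))
            + ((12 * b - 4 : ℤ) : ℚ) * (((-9) * b + 8 * g + 12 : ℤ) : ℚ) ^ 2)
          * (((-9) * b ^ 2 + 9 * b * g - 4 * g ^ 2 + 18 * b - 12 * g - 8 : ℤ) : ℚ) ≠ 0 := by
    rw [hDcast]
    exact Int.cast_ne_zero.mpr hDZ.ne'
  exact aux_elim _ _ _ _ _ _ hB hD (CLIdeal g b)
    (Ideal.subset_span (Set.mem_insert _ _))
    (Ideal.subset_span (Set.mem_insert_of_mem _ (Set.mem_insert _ _)))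
    (Ideal.subset_span (Set.mem_insert_of_mem _ (Set.mem_insert_of_mem _ (Set.mem_insert _ _))))

end
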